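/- arXiv:2403.06812 — 2 statements merged into one kernel-verified Lean document; each statement's English description precedes it below -/
import Mathlib

section
/- Let π, π̃ : X → [0,1], let x̄ = (x̄^1, ..., x̄^k) ∈ X^k, let α ∈ (0,1], ε' ∈ (0,α], and suppose |π(x̄^i) − π̃(x̄^i)| ≤ ε'/4 for all i ∈ [k]. Let S be a monotone auditing scheme (an aggregation of m threshold auditors via a monotone Boolean function, as in the monotone auditing characterization). Define Unfair(π) = 1 if S reports at least one violation of π on x̄ at sensitivity α, else 0; and define the proxy loss: if S applied to π̃ at sensitivity α − ε' reports a violation on the pair (x̄^l, x̄^r), then Proxy = [π(x̄^l) − π(x̄^r)] − [π̃(x̄^l) − π̃(x̄^r)] + ε', and Proxy = 0 if S reports no violation of π̃ at sensitivity α − ε'. Then Unfair(π) ≤ (2/ε') · Proxy. -/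
open Classical in
/-- The unfairness loss of `π` is upper bounded by `(2/ε')` times the unfairness proxy
loss obtained by querying a monotone auditing scheme with the approximation `π̃` at the
stricter sensitivity `α - ε'`. -/
theorem stmt_3 {X : Type*} (k m : ℕ)
    (f : (Fin m → Bool) → Bool)
    (hf : ∀ v v' : Fin m → Bool, (∀ i, v i ≤ v' i) → f v ≤ f v')
    (d : Fin m → X → X → ℝ)
    (hd : ∀ i x x', d i x x' ∈ Set.Icc (0 : ℝ) 1)
    (π πt : X → ℝ)
    (hπ : ∀ z, π z ∈ Set.Icc (0 : ℝ) 1) (hπt : ∀ z, πt z ∈ Set.Icc (0 : ℝ) 1)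
    (xb : Fin k → X)
    (α ε' : ℝ) (hα : 0 < α) (hα1 : α ≤ 1) (hε' : 0 < ε') (hε'α : ε' ≤ α)
    (happrox : ∀ i, |π (xb i) - πt (xb i)| ≤ ε' / 4)
    (report : Option (Fin k × Fin k))
    (hnone : report = none →
      ∀ l r : Fin k,
        f (fun i => decide (πt (xb l) - πt (xb r) > d i (xb l) (xb r) + (α - ε'))) = false)
    (hsome : ∀ l r : Fin k, report = some (l, r) →
      f (fun i => decide (πt (xb l) - πt (xb r) > d i (xb l) (xb r) + (α - ε'))) = true) :
    (if ∃ l r : Fin k,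
        f (fun i => decide (π (xb l) - π (xb r) > d i (xb l) (xb r) + α)) = true
      then (1 : ℝ) else 0) ≤
      (2 / ε') *
        (report.elim 0 (fun p =>
          (π (xb p.1) - π (xb p.2)) - (πt (xb p.1) - πt (xb p.2)) + ε')) := by
  match report with
  | none =>
    simp only [Option.elim, mul_zero]
    rw [if_neg]
    rintro ⟨l, r, hlr⟩
    have hl := abs_le.mp (happrox l)
    have hr := abs_le.mp (happrox r)
    have hmono := hf (fun i => decide (π (xb l) - π (xb r) > d i (xb l) (xb r) + α))
      (fun i => decide (πt (xb l) - πt (xb r) > d i (xb l) (xb r) + (α - ε')))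
      (by
        intro i
        cases hdec : decide (π (xb l) - π (xb r) > d i (xb l) (xb r) + α) with
        | false => exact Bool.false_le _
        | true =>
          have hP := of_decide_eq_true hdec
          have : πt (xb l) - πt (xb r) > d i (xb l) (xb r) + (α - ε') := by linarith
          simp [this])
    have := hnone rfl l r
    rw [hlr, this] at hmono
    exact absurd hmono (by simp)
  | some (l, r) =>
    have hl := abs_le.mp (happrox l)
    have hr := abs_le.mp (happrox r)
    have h1 : (1 : ℝ) ≤ (2 / ε') *
        ((π (xb l) - π (xb r)) - (πt (xb l) - πt (xb r)) + ε') := by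
      have h2 : ε' / 2 ≤ (π (xb l) - π (xb r)) - (πt (xb l) - πt (xb r)) + ε' := by linarith
      calc (1 : ℝ) = (2 / ε') * (ε' / 2) := by field_simp
        _ ≤ _ := by
          apply mul_le_mul_of_nonneg_left h2 (by positivity)
    simp only [Option.elim]
    split
    · exact h1
    · linarith
end

section
/- Let α ∈ (0,1], ε ∈ (0,α], and set ε' = ε/2. Suppose for each t ∈ [T] the auditing scheme S^t is a monotone aggregation of threshold auditors with distance functions d^{t,i} : X × X → [0,1], and suppose π̃^t : X → [0,1] are arbitrary policies. Let π : X → [0,1] satisfy: for every t and every pair (x, x') of individuals arriving at round t, and for the pivot auditor index i*(t,x,x') given by the monotone characterization, π(x) − π(x') ≤ d^{t,i*}(x,x') + α − ε (i.e., π has no (α−ε)-violations under any S^t). Then for every t ∈ [T], the proxy unfairness loss of π at round t satisfies Proxy^t(π) ≤ 0, where Proxy^t(π) = [π(x^l) − π(x^r)] − [π̃^t(x^l) − π̃^t(x^r)] + ε' if S^t reports an (α−ε')-violation of π̃^t on the pair (x^l, x^r), and Proxy^t(π) = 0 if no violation is reported. -/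
/-- If `π` has no `(α-ε)`-violations under the monotone auditing schemes `S^t`, then its
proxy unfairness loss (with respect to violations of `π̃^t` reported at sensitivity
`α - ε' = α - ε/2`) is nonpositive on every round. -/
theorem stmt_6 {X : Type*} (T k : ℕ)
    (m : Fin T → ℕ)
    (f : (t : Fin T) → (Fin (m t) → Bool) → Bool)
    (hf : ∀ t, ∀ v v' : Fin (m t) → Bool, (∀ i, v i ≤ v' i) → f t v ≤ f t v')
    (d : (t : Fin T) → Fin (m t) → X → X → ℝ)
    (hd : ∀ t i x x', d t i x x' ∈ Set.Icc (0 : ℝ) 1)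
    (xb : Fin T → Fin k → X)
    (α ε ε' : ℝ) (hα : 0 < α) (hα1 : α ≤ 1) (hε : 0 < ε) (hεα : ε ≤ α)
    (hε' : ε' = ε / 2)
    (πt : Fin T → X → ℝ)
    (π : X → ℝ) (hπ : ∀ z, π z ∈ Set.Icc (0 : ℝ) 1)
    (hfair : ∀ (t : Fin T) (l r : Fin k),
      f t (fun i => decide (π (xb t l) - π (xb t r) >
        d t i (xb t l) (xb t r) + (α - ε))) = false)
    (report : Fin T → Option (Fin k × Fin k))
    (hsome : ∀ (t : Fin T) (l r : Fin k), report t = some (l, r) →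
      f t (fun i => decide (πt t (xb t l) - πt t (xb t r) >
        d t i (xb t l) (xb t r) + (α - ε'))) = true) :
    ∀ t : Fin T,
      (report t).elim (0 : ℝ) (fun p =>
        (π (xb t p.1) - π (xb t p.2)) - (πt t (xb t p.1) - πt t (xb t p.2)) + ε') ≤ 0 := by
  intro t
  cases hrep : report t with
  | none => simp
  | some p =>
    obtain ⟨l, r⟩ := p
    have h1 := hsome t l r hrep
    have h2 := hfair t l r
    -- find an index where πt-violation holds but π-violation fails
    have key : ∃ i, (πt t (xb t l) - πt t (xb t r) >
        d t i (xb t l) (xb t r) + (α - ε')) ∧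
        ¬ (π (xb t l) - π (xb t r) > d t i (xb t l) (xb t r) + (α - ε)) := by
      by_contra hcon
      push_neg at hcon
      have hle : ∀ i, (decide (πt t (xb t l) - πt t (xb t r) >
          d t i (xb t l) (xb t r) + (α - ε'))) ≤
          (decide (π (xb t l) - π (xb t r) > d t i (xb t l) (xb t r) + (α - ε))) := by
        intro i
        by_cases hpi : πt t (xb t l) - πt t (xb t r) > d t i (xb t l) (xb t r) + (α - ε')
        · have := hcon i hpi
          simp [hpi, this]
        · simp [hpi]
      have := hf t _ _ hle
      rw [h1, h2] at this
      exact absurd this (by simp)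
    obtain ⟨i, hvt, hvπ⟩ := key
    push_neg at hvπ
    simp only [Option.elim]
    have : π (xb t l) - π (xb t r) - (πt t (xb t l) - πt t (xb t r)) + ε' ≤
        (d t i (xb t l) (xb t r) + (α - ε)) - (d t i (xb t l) (xb t r) + (α - ε')) + ε' := by
      have := hvt.le
      linarith
    linarith
end
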